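/- For every n ≥ 1, the taxi walk connective constant satisfies μ_taxi ≥ b_n^{1/n}. -/

import Mathlib

open Filter

/-- The oriented step relation of the Manhattan lattice. -/
def taxiStep (u v : ℤ × ℤ) : Prop :=
  (Even u.2 ∧ v = (u.1 + 1, u.2)) ∨
  (Odd u.2 ∧ v = (u.1 - 1, u.2)) ∨
  (Even u.1 ∧ v = (u.1, u.2 + 1)) ∨
  (Odd u.1 ∧ v = (u.1, u.2 - 1))

/-- Perpendicularity of two step vectors. -/
def perp (d e : ℤ × ℤ) : Prop := d.1 * e.1 + d.2 * e.2 = 0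

instance (d e : ℤ × ℤ) : Decidable (perp d e) := by unfold perp; infer_instance

/-- The walk `l` turns at its `i`-th vertex (meaningful for `1 ≤ i ≤ l.length - 2`). -/
def turnAt (l : List (ℤ × ℤ)) (i : ℕ) : Prop :=
  perp (l.getD i 0 - l.getD (i - 1) 0) (l.getD (i + 1) 0 - l.getD i 0)

instance (l : List (ℤ × ℤ)) (i : ℕ) : Decidable (turnAt l i) := by
  unfold turnAt; infer_instance

/-- A taxi walk, recorded as its list of vertices (a walk of length `n` has `n + 1` vertices). -/
def IsTaxiWalk (l : List (ℤ × ℤ)) : Prop :=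
  l ≠ [] ∧ l.Nodup ∧
  (∀ i, i + 1 < l.length → taxiStep (l.getD i 0) (l.getD (i + 1) 0)) ∧
  (∀ i, 1 ≤ i → i + 2 < l.length → ¬(turnAt l i ∧ turnAt l (i + 1)))

/-- The set of taxi walks of length `n` starting at the origin. -/
def originWalks (n : ℕ) : Set (List (ℤ × ℤ)) :=
  {l | IsTaxiWalk l ∧ l.length = n + 1 ∧ l.getD 0 0 = 0}

/-- `taxiCount n` is `c_n`, the number of taxi walks of length `n` starting at the origin. -/
noncomputable def taxiCount (n : ℕ) : ℕ := (originWalks n).ncard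

/-- The turn-word of a walk: `true` (the letter `t`) where the walk turns,
`false` (the letter `s`) where it goes straight. -/
def turnWord (l : List (ℤ × ℤ)) : List Bool :=
  (List.range (l.length - 2)).map fun i => decide (turnAt l (i + 1))

/-- The encoding of a taxi walk starting at the origin: the first coordinate is `true`
(for `N`) if `v₁ = (0,1)` and `false` (for `E`) if `v₁ = (1,0)`; the second is the turn-word. -/
def encode (l : List (ℤ × ℤ)) : Bool × List Bool :=
  (decide (l.getD 1 0 = (0, 1)), turnWord l)

/-- A bridge: a taxi walk from `(0,0)` to `(1,0)` staying at abscissa `≥ 1` after the start,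
whose last step is horizontal and ends at maximal abscissa. -/
def IsBridge (l : List (ℤ × ℤ)) : Prop :=
  IsTaxiWalk l ∧ 2 ≤ l.length ∧ l.getD 0 0 = (0, 0) ∧ l.getD 1 0 = (1, 0) ∧
  (∀ i, 1 ≤ i → i < l.length → 1 ≤ (l.getD i 0).1) ∧
  (l.getD (l.length - 1) 0).2 = (l.getD (l.length - 2) 0).2 ∧
  (∀ i, i < l.length → (l.getD i 0).1 ≤ (l.getD (l.length - 1) 0).1)

/-- `bridgeCount n` is `b_n`, the number of bridges of length `n`, with `b_0 = 1`. -/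
noncomputable def bridgeCount : ℕ → ℕ
  | 0 => 1
  | n + 1 => {l : List (ℤ × ℤ) | IsBridge l ∧ l.length = n + 2}.ncard

/-- The normalizing symmetry `f_{(x,y)}` of the oriented Manhattan lattice. -/
def normMap (p : ℤ × ℤ) (q : ℤ × ℤ) : ℤ × ℤ :=
  if Even p.1 then
    (if Even p.2 then (q.1 - p.1, q.2 - p.2) else (-(q.1 - p.1), q.2 - p.2))
  else
    (if Even p.2 then (q.1 - p.1, -(q.2 - p.2)) else (-(q.1 - p.1), -(q.2 - p.2)))

/-- The vertex `v_i` is a cutvertex of the bridge `l`. -/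
def IsCutAt (l : List (ℤ × ℤ)) (i : ℕ) : Prop :=
  0 < i ∧ i + 1 < l.length ∧
  IsBridge (l.take (i + 1)) ∧
  l.getD (i + 1) 0 = l.getD i 0 + (1, 0) ∧
  IsBridge ((l.drop i).map (normMap (l.getD i 0)))

/-- An irreducible bridge: a bridge with no cutvertex. -/
def IsIrreducibleBridge (l : List (ℤ × ℤ)) : Prop :=
  IsBridge l ∧ ∀ i, ¬ IsCutAt l i

/-- `irrBridgeCount n` is `a_n`, the number of irreducible bridges of length `n`, with `a_0 = 0`. -/
noncomputable def irrBridgeCount : ℕ → ℕ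
  | 0 => 0
  | n + 1 => {l : List (ℤ × ℤ) | IsIrreducibleBridge l ∧ l.length = n + 2}.ncard

/-!
Gluing a bridge after another one, moved by the lattice automorphism taking the origin to the
end of the first, gives a bridge: the first lies weakly left of the junction and the second
strictly right of it, so the glued walk is self-avoiding, and both pass the junction eastwards,
so no new turn appears. Gluing is injective, hence `b_m b_n ≤ b_{m+n}`, so
`b_n ^ k ≤ b_{nk} ≤ c_{nk}`, and taking `nk`-th roots as `k → ∞` gives `b_n ^ (1/n) ≤ μ`.
-/

/-- Translation by `p`, composed with the reflection of each axis whose orientation the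
translation would reverse: an automorphism of the oriented lattice sending `(0, 0)` to `p`. -/
def autAt (p r : ℤ × ℤ) : ℤ × ℤ :=
  (p.1 + (if Even p.2 then r.1 else -r.1), p.2 + (if Even p.1 then r.2 else -r.2))

lemma autAt_injective (p : ℤ × ℤ) : Function.Injective (autAt p) := by
  intro u v h
  simp only [autAt, Prod.ext_iff] at h ⊢
  split_ifs at h <;> omega

@[simp]
lemma autAt_zero (p : ℤ × ℤ) : autAt p (0, 0) = p := by
  unfold autAt; split_ifs <;> simp

lemma fst_autAt_of_even {p : ℤ × ℤ} (hp : Even p.2) (r : ℤ × ℤ) :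
    (autAt p r).1 = p.1 + r.1 := by
  simp [autAt, hp]

lemma snd_autAt_congr (p : ℤ × ℤ) {u v : ℤ × ℤ} (h : u.2 = v.2) :
    (autAt p u).2 = (autAt p v).2 := by
  simp [autAt, h]

lemma taxiStep_autAt (p : ℤ × ℤ) {u v : ℤ × ℤ} (h : taxiStep u v) :
    taxiStep (autAt p u) (autAt p v) := by
  obtain ⟨p1, p2⟩ := p; obtain ⟨u1, u2⟩ := u; obtain ⟨v1, v2⟩ := v
  simp only [taxiStep, autAt, Int.even_iff, Int.odd_iff, Prod.mk.injEq] at h ⊢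
  rcases Int.emod_two_eq p1 with h1 | h1 <;> rcases Int.emod_two_eq p2 with h2 | h2 <;>
    simp only [h1, h2, reduceIte] <;>
    rcases h with ⟨_, _, _⟩ | ⟨_, _, _⟩ | ⟨_, _, _⟩ | ⟨_, _, _⟩ <;>
    first
    | exact Or.inl ⟨by omega, by omega, by omega⟩
    | exact Or.inr (Or.inl ⟨by omega, by omega, by omega⟩)
    | exact Or.inr (Or.inr (Or.inl ⟨by omega, by omega, by omega⟩))
    | exact Or.inr (Or.inr (Or.inr ⟨by omega, by omega, by omega⟩))

lemma perp_autAt_sub_iff (p u v w x : ℤ × ℤ) :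
    perp (autAt p u - autAt p v) (autAt p w - autAt p x) ↔ perp (u - v) (w - x) := by
  simp only [perp, autAt, Prod.fst_sub, Prod.snd_sub]
  split_ifs <;> constructor <;> intro h <;> linear_combination h

namespace List

variable {α : Type*}

lemma ext_getD {l l' : List α} (d : α) (h : l.length = l'.length)
    (hg : ∀ i < l.length, l.getD i d = l'.getD i d) : l = l' :=
  ext_getElem h fun i hi hi' => by rw [← getD_eq_getElem _ d, ← getD_eq_getElem _ d, hg i hi]

lemma nodup_iff_getD_inj {l : List α} (d : α) :
    l.Nodup ↔ ∀ i < l.length, ∀ j < l.length, l.getD i d = l.getD j d → i = j := by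
  rw [nodup_iff_injective_getElem]
  constructor
  · intro h i hi j hj hij
    rw [getD_eq_getElem _ _ hi, getD_eq_getElem _ _ hj] at hij
    exact congrArg Fin.val (@h ⟨i, hi⟩ ⟨j, hj⟩ hij)
  · rintro h ⟨i, hi⟩ ⟨j, hj⟩ hij
    exact Fin.ext (h i hi j hj (by rwa [getD_eq_getElem _ _ hi, getD_eq_getElem _ _ hj]))

lemma finite_setOf_length_eq_subset {K : Set α} (hK : K.Finite) (N : ℕ) :
    {l : List α | l.length = N ∧ ∀ x ∈ l, x ∈ K}.Finite := by
  have := hK.to_subtype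
  refine ((finite_length_eq K N).image (map Subtype.val)).subset ?_
  rintro l ⟨hlen, hmem⟩
  lift l to List K using hmem
  exact ⟨l, by simpa using hlen, rfl⟩

end List

lemma IsBridge.two_le_length {l : List (ℤ × ℤ)} (h : IsBridge l) : 2 ≤ l.length := h.2.1

lemma IsBridge.getD_last {l : List (ℤ × ℤ)} {m : ℕ} (h : IsBridge l) (hl : l.length = m + 1) :
    Even (l.getD m 0).2 ∧ l.getD m 0 = l.getD (m - 1) 0 + (1, 0) := by
  obtain ⟨⟨-, -, hstep, -⟩, hlen, -, -, -, hy, hmax⟩ := h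
  rw [hl, show m + 1 - 1 = m by omega] at hy hmax
  rw [show m + 1 - 2 = m - 1 by omega] at hy
  have hs := hstep (m - 1) (by omega)
  have hx := hmax (m - 1) (by omega)
  rw [show m - 1 + 1 = m by omega] at hs
  rcases hs with ⟨he, hv⟩ | ⟨-, hv⟩ | ⟨-, hv⟩ | ⟨-, hv⟩ <;> rw [hv] at hx hy ⊢
  · exact ⟨he, by simp [Prod.ext_iff]⟩
  all_goals simp at hx hy

def glue (l₁ l₂ : List (ℤ × ℤ)) : List (ℤ × ℤ) :=
  l₁.dropLast ++ l₂.map (autAt (l₁.getD (l₁.length - 1) 0))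

section Glue

variable {l₁ l₂ : List (ℤ × ℤ)} {m n i : ℕ}

lemma length_glue (h₁ : l₁.length = m + 1) (h₂ : l₂.length = n + 1) :
    (glue l₁ l₂).length = m + n + 1 := by
  simp [glue, h₁, h₂]; omega

lemma getD_glue_of_lt (h₁ : l₁.length = m + 1) (hi : i < m) :
    (glue l₁ l₂).getD i 0 = l₁.getD i 0 := by
  rw [glue, List.getD_append _ _ _ _ (by simp [h₁, hi]), List.getD_eq_getElem _ _ (by simp; omega),
    List.getElem_dropLast, List.getD_eq_getElem]

lemma getD_glue_of_ge (h₁ : l₁.length = m + 1) (h₂ : l₂.length = n + 1) (hmi : m ≤ i)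
    (hi : i ≤ m + n) : (glue l₁ l₂).getD i 0 = autAt (l₁.getD m 0) (l₂.getD (i - m) 0) := by
  have hlen : l₁.dropLast.length = m := by simp [h₁]
  rw [glue, List.getD_append_right _ _ _ _ (by omega), hlen, h₁, Nat.add_sub_cancel,
    List.getD_eq_getElem _ _ (by simp [h₂]; omega), List.getElem_map,
    List.getD_eq_getElem l₂ _ (by omega)]

lemma getD_glue_of_le (h₁ : l₁.length = m + 1) (h₂ : l₂.length = n + 1)
    (h₂₀ : l₂.getD 0 0 = (0, 0)) (hi : i ≤ m) : (glue l₁ l₂).getD i 0 = l₁.getD i 0 := by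
  obtain hi | rfl := hi.lt_or_eq
  · exact getD_glue_of_lt h₁ hi
  · rw [getD_glue_of_ge h₁ h₂ le_rfl (by omega), Nat.sub_self, h₂₀, autAt_zero]

lemma fst_getD_glue_of_ge (h₁ : l₁.length = m + 1) (h₂ : l₂.length = n + 1)
    (heven : Even (l₁.getD m 0).2) (hmi : m ≤ i) (hi : i ≤ m + n) :
    ((glue l₁ l₂).getD i 0).1 = (l₁.getD m 0).1 + (l₂.getD (i - m) 0).1 := by
  rw [getD_glue_of_ge h₁ h₂ hmi hi, fst_autAt_of_even heven]

lemma taxiStep_getD_glue (h₁ : l₁.length = m + 1) (h₂ : l₂.length = n + 1)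
    (h₂₀ : l₂.getD 0 0 = (0, 0))
    (hs₁ : ∀ i, i + 1 < l₁.length → taxiStep (l₁.getD i 0) (l₁.getD (i + 1) 0))
    (hs₂ : ∀ i, i + 1 < l₂.length → taxiStep (l₂.getD i 0) (l₂.getD (i + 1) 0))
    (hi : i + 1 < (glue l₁ l₂).length) :
    taxiStep ((glue l₁ l₂).getD i 0) ((glue l₁ l₂).getD (i + 1) 0) := by
  rw [length_glue h₁ h₂] at hi
  by_cases him : i + 1 ≤ m
  · rw [getD_glue_of_le h₁ h₂ h₂₀ (by omega), getD_glue_of_le h₁ h₂ h₂₀ him]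
    exact hs₁ i (by omega)
  · rw [getD_glue_of_ge h₁ h₂ (by omega) (by omega), getD_glue_of_ge h₁ h₂ (by omega) (by omega),
      show i + 1 - m = i - m + 1 by omega]
    exact taxiStep_autAt _ (hs₂ (i - m) (by omega))

lemma turnAt_glue_of_lt (h₁ : l₁.length = m + 1) (h₂ : l₂.length = n + 1)
    (h₂₀ : l₂.getD 0 0 = (0, 0)) (hi : i < m) : turnAt (glue l₁ l₂) i ↔ turnAt l₁ i := by
  simp only [turnAt]
  rw [getD_glue_of_le h₁ h₂ h₂₀ (by omega), getD_glue_of_le h₁ h₂ h₂₀ (by omega),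
    getD_glue_of_le h₁ h₂ h₂₀ (by omega)]

lemma turnAt_glue_of_gt (h₁ : l₁.length = m + 1) (h₂ : l₂.length = n + 1) (hmi : m < i)
    (hi : i < m + n) : turnAt (glue l₁ l₂) i ↔ turnAt l₂ (i - m) := by
  simp only [turnAt]
  rw [getD_glue_of_ge h₁ h₂ (by omega) (by omega), getD_glue_of_ge h₁ h₂ (by omega) (by omega),
    getD_glue_of_ge h₁ h₂ (by omega) (by omega), show i - 1 - m = i - m - 1 by omega,
    show i + 1 - m = i - m + 1 by omega, perp_autAt_sub_iff]

end Glue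

section GlueBridges

variable {l₁ l₂ : List (ℤ × ℤ)} {m n i : ℕ}

lemma fst_getD_glue_le (hb₁ : IsBridge l₁) (h₁ : l₁.length = m + 1) (h₂ : l₂.length = n + 1)
    (h₂₀ : l₂.getD 0 0 = (0, 0)) (hi : i ≤ m) : ((glue l₁ l₂).getD i 0).1 ≤ (l₁.getD m 0).1 := by
  obtain ⟨-, -, -, -, -, -, hmax₁⟩ := hb₁
  rw [getD_glue_of_le h₁ h₂ h₂₀ hi]
  simpa [h₁] using hmax₁ i (by omega)

lemma lt_fst_getD_glue (hb₁ : IsBridge l₁) (hb₂ : IsBridge l₂) (h₁ : l₁.length = m + 1)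
    (h₂ : l₂.length = n + 1) (hmi : m < i) (hi : i ≤ m + n) :
    (l₁.getD m 0).1 < ((glue l₁ l₂).getD i 0).1 := by
  obtain ⟨-, -, -, -, hpos₂, -⟩ := hb₂
  rw [fst_getD_glue_of_ge h₁ h₂ (hb₁.getD_last h₁).1 hmi.le hi]
  have := hpos₂ (i - m) (by omega) (by omega)
  omega

lemma nodup_glue (hb₁ : IsBridge l₁) (hb₂ : IsBridge l₂) (h₁ : l₁.length = m + 1)
    (h₂ : l₂.length = n + 1) : (glue l₁ l₂).Nodup := by
  have h₂₀ : l₂.getD 0 0 = (0, 0) := hb₂.2.2.1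
  have hnd₁ := (List.nodup_iff_getD_inj 0).1 (hb₁.1.2.1 : l₁.Nodup)
  have hnd₂ := (List.nodup_iff_getD_inj 0).1 (hb₂.1.2.1 : l₂.Nodup)
  have hsep : ∀ i j, i < m → m < j → j ≤ m + n →
      (glue l₁ l₂).getD i 0 ≠ (glue l₁ l₂).getD j 0 := fun i j hi hmj hj heq => by
    have hleft := fst_getD_glue_le hb₁ h₁ h₂ h₂₀ hi.le
    have hright := lt_fst_getD_glue hb₁ hb₂ h₁ h₂ hmj hj
    rw [heq] at hleft
    omega
  rw [List.nodup_iff_getD_inj 0, length_glue h₁ h₂]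
  intro i hi j hj hij
  by_cases hle : i ≤ m ∧ j ≤ m
  · rw [getD_glue_of_le h₁ h₂ h₂₀ hle.1, getD_glue_of_le h₁ h₂ h₂₀ hle.2] at hij
    exact hnd₁ i (by omega) j (by omega) hij
  by_cases hge : m ≤ i ∧ m ≤ j
  · rw [getD_glue_of_ge h₁ h₂ hge.1 (by omega), getD_glue_of_ge h₁ h₂ hge.2 (by omega)] at hij
    have := hnd₂ (i - m) (by omega) (j - m) (by omega) (autAt_injective _ hij)
    omega
  rcases Nat.lt_or_gt_of_ne (show i ≠ j by omega) with h | h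
  · exact absurd hij (hsep i j (by omega) (by omega) (by omega))
  · exact absurd hij.symm (hsep j i (by omega) (by omega) (by omega))

/-- Both bridges pass the junction going east, so the glued walk goes straight there. -/
lemma not_turnAt_glue (hb₁ : IsBridge l₁) (hb₂ : IsBridge l₂) (h₁ : l₁.length = m + 1)
    (h₂ : l₂.length = n + 1) : ¬ turnAt (glue l₁ l₂) m := by
  obtain ⟨heven, hlast⟩ := hb₁.getD_last h₁
  have hm := hb₁.two_le_length
  have hn := hb₂.two_le_length
  have h₂₀ : l₂.getD 0 0 = (0, 0) := hb₂.2.2.1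
  have h₂₁ : l₂.getD 1 0 = (1, 0) := hb₂.2.2.2.1
  have hin : l₁.getD m 0 - l₁.getD (m - 1) 0 = (1, 0) := by rw [hlast]; simp
  have hout : autAt (l₁.getD m 0) (1, 0) - l₁.getD m 0 = (1, 0) := by
    ext <;> simp [autAt, heven, -List.getD_eq_getElem?_getD]
  simp only [turnAt]
  rw [getD_glue_of_le h₁ h₂ h₂₀ le_rfl, getD_glue_of_le h₁ h₂ h₂₀ (by omega),
    getD_glue_of_ge h₁ h₂ (by omega) (by omega), Nat.add_sub_cancel_left, h₂₁, hin, hout]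
  simp [perp]

lemma noConsecutiveTurns_glue (hb₁ : IsBridge l₁) (hb₂ : IsBridge l₂) (h₁ : l₁.length = m + 1)
    (h₂ : l₂.length = n + 1) (hi : 1 ≤ i) (hi' : i + 2 < (glue l₁ l₂).length) :
    ¬(turnAt (glue l₁ l₂) i ∧ turnAt (glue l₁ l₂) (i + 1)) := by
  have h₂₀ : l₂.getD 0 0 = (0, 0) := hb₂.2.2.1
  have hmid := not_turnAt_glue hb₁ hb₂ h₁ h₂
  rw [length_glue h₁ h₂] at hi'
  rcases lt_trichotomy (i + 1) m with hlt | heq | hgt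
  · rw [turnAt_glue_of_lt h₁ h₂ h₂₀ (by omega), turnAt_glue_of_lt h₁ h₂ h₂₀ hlt]
    exact hb₁.1.2.2.2 i hi (by omega)
  · rw [heq]; exact fun h => hmid h.2
  · obtain rfl | hgt := (Nat.le_of_lt_succ hgt).eq_or_lt'
    · exact fun h => hmid h.1
    · rw [turnAt_glue_of_gt h₁ h₂ hgt (by omega), turnAt_glue_of_gt h₁ h₂ (by omega) (by omega),
        show i + 1 - m = i - m + 1 by omega]
      exact hb₂.1.2.2.2 (i - m) (by omega) (by omega)

theorem isBridge_glue (hb₁ : IsBridge l₁) (hb₂ : IsBridge l₂) : IsBridge (glue l₁ l₂) := by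
  obtain ⟨m, h₁⟩ : ∃ m, l₁.length = m + 1 := ⟨l₁.length - 1, by have := hb₁.two_le_length; omega⟩
  obtain ⟨n, h₂⟩ : ∃ n, l₂.length = n + 1 := ⟨l₂.length - 1, by have := hb₂.two_le_length; omega⟩
  have ⟨⟨_, _, hs₁, _⟩, _, h₁₀, h₁₁, hpos₁, _, _⟩ := hb₁
  have ⟨⟨_, _, hs₂, _⟩, _, h₂₀, _, hpos₂, hy₂, hmax₂⟩ := hb₂
  have hlen := length_glue (l₂ := l₂) h₁ h₂
  have hlast : (glue l₁ l₂).length - 1 = m + n := by omega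
  refine ⟨⟨fun h => by simp [h] at hlen, nodup_glue hb₁ hb₂ h₁ h₂,
    fun i hi => taxiStep_getD_glue h₁ h₂ h₂₀ hs₁ hs₂ hi,
    fun i hi hi' => noConsecutiveTurns_glue hb₁ hb₂ h₁ h₂ hi hi'⟩, by omega, ?_, ?_, ?_, ?_, ?_⟩
  · rwa [getD_glue_of_le h₁ h₂ h₂₀ (by omega)]
  · rwa [getD_glue_of_le h₁ h₂ h₂₀ (by omega)]
  · intro i hi hi'
    rcases le_or_gt i m with him | hmi
    · rw [getD_glue_of_le h₁ h₂ h₂₀ him]; exact hpos₁ i hi (by omega)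
    · have := lt_fst_getD_glue hb₁ hb₂ h₁ h₂ hmi (by omega)
      have := hpos₁ m (by omega) (by omega)
      omega
  · rw [hlast, show (glue l₁ l₂).length - 2 = m + n - 1 by omega,
      getD_glue_of_ge h₁ h₂ (by omega) le_rfl, getD_glue_of_ge h₁ h₂ (by omega) (by omega)]
    apply snd_autAt_congr
    rw [h₂] at hy₂
    simpa [show m + n - 1 - m = n - 1 by omega] using hy₂
  · intro i hi
    have heven := (hb₁.getD_last h₁).1
    rw [hlast, fst_getD_glue_of_ge h₁ h₂ heven (by omega) le_rfl, Nat.add_sub_cancel_left]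
    rcases le_or_gt i m with him | hmi
    · have := fst_getD_glue_le hb₁ h₁ h₂ h₂₀ him
      have := hpos₂ n (by omega) (by omega)
      omega
    · rw [fst_getD_glue_of_ge h₁ h₂ heven hmi.le (by omega)]
      have := hmax₂ (i - m) (by omega)
      rw [h₂, Nat.add_sub_cancel] at this
      omega

lemma getD_mem_Icc_of_mem_originWalks {k : ℕ} {l : List (ℤ × ℤ)} (hl : l ∈ originWalks k) :
    ∀ i < l.length, l.getD i 0 ∈ Set.Icc (-(i : ℤ), -(i : ℤ)) (i, i) := by
  obtain ⟨⟨-, -, hstep, -⟩, -, h₀⟩ := hl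
  intro i hi
  induction i with
  | zero => rw [h₀]; exact ⟨by simp [Prod.le_def], by simp [Prod.le_def]⟩
  | succ i ih =>
    have hprev := ih (by omega)
    simp only [Set.mem_Icc, Prod.le_def] at hprev ⊢
    rcases hstep i hi with ⟨-, hv⟩ | ⟨-, hv⟩ | ⟨-, hv⟩ | ⟨-, hv⟩ <;> rw [hv] <;> push_cast <;> omega

lemma originWalks_finite (k : ℕ) : (originWalks k).Finite := by
  refine (List.finite_setOf_length_eq_subset
    (Set.finite_Icc (-(k : ℤ), -(k : ℤ)) (k, k)) (k + 1)).subset fun l hl => ⟨hl.2.1, ?_⟩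
  intro x hx
  obtain ⟨i, hi, rfl⟩ := List.getElem_of_mem hx
  have hbox := getD_mem_Icc_of_mem_originWalks hl i hi
  rw [List.getD_eq_getElem _ _ hi] at hbox
  have : i ≤ k := by have := hl.2.1; omega
  simp only [Set.mem_Icc, Prod.le_def] at hbox ⊢
  omega

def bridges (k : ℕ) : Set (List (ℤ × ℤ)) := {l | IsBridge l ∧ l.length = k + 1}

lemma bridgeCount_eq_ncard {k : ℕ} (hk : k ≠ 0) : bridgeCount k = (bridges k).ncard := by
  obtain ⟨j, rfl⟩ := Nat.exists_eq_succ_of_ne_zero hk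
  rfl

lemma bridges_subset_originWalks (k : ℕ) : bridges k ⊆ originWalks k :=
  fun _ ⟨hb, hlen⟩ => ⟨hb.1, hlen, hb.2.2.1⟩

lemma glue_injOn (m n : ℕ) :
    Set.InjOn (fun q : List (ℤ × ℤ) × List (ℤ × ℤ) => glue q.1 q.2) (bridges m ×ˢ bridges n) := by
  rintro ⟨a, b⟩ ⟨⟨-, ha⟩, hb, hbl⟩ ⟨a', b'⟩ ⟨⟨-, ha'⟩, hb', hbl'⟩ (heq : glue a b = glue a' b')
  dsimp only at ha hb hbl ha' hb' hbl'
  have ea : a = a' := List.ext_getD 0 (by omega) fun i hi => by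
    rw [← getD_glue_of_le ha hbl hb.2.2.1 (by omega), heq,
      getD_glue_of_le ha' hbl' hb'.2.2.1 (by omega)]
  subst ea
  suffices b = b' by rw [this]
  refine List.ext_getD 0 (by omega) fun j hj => autAt_injective (a.getD m 0) ?_
  have e := getD_glue_of_ge (i := m + j) ha hbl (by omega) (by omega)
  rw [heq, getD_glue_of_ge ha' hbl' (by omega) (by omega), Nat.add_sub_cancel_left] at e
  exact e.symm

lemma bridgeCount_mul_le (m n : ℕ) : bridgeCount m * bridgeCount n ≤ bridgeCount (m + n) := by
  rcases eq_or_ne m 0 with rfl | hm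
  · simp [bridgeCount]
  rcases eq_or_ne n 0 with rfl | hn
  · simp [bridgeCount]
  rw [bridgeCount_eq_ncard hm, bridgeCount_eq_ncard hn, bridgeCount_eq_ncard (by omega),
    ← Set.ncard_prod]
  exact Set.ncard_le_ncard_of_injOn _
    (fun q ⟨⟨hb₁, h₁⟩, hb₂, h₂⟩ => ⟨isBridge_glue hb₁ hb₂, length_glue h₁ h₂⟩) (glue_injOn m n)
    ((originWalks_finite _).subset (bridges_subset_originWalks _))

lemma bridgeCount_pow_le (n k : ℕ) : bridgeCount n ^ k ≤ bridgeCount (n * k) := by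
  induction k with
  | zero => simp [bridgeCount]
  | succ k ih =>
    rw [pow_succ, Nat.mul_succ]
    exact (Nat.mul_le_mul_right _ ih).trans (bridgeCount_mul_le _ _)

lemma bridgeCount_le_taxiCount {n : ℕ} (hn : n ≠ 0) : bridgeCount n ≤ taxiCount n := by
  rw [bridgeCount_eq_ncard hn]
  exact Set.ncard_le_ncard (bridges_subset_originWalks n) (originWalks_finite n)

lemma rpow_one_div_le_of_tendsto_of_pow_le {c : ℕ → ℝ} {a μ : ℝ} {n : ℕ} (ha : 0 ≤ a)
    (hn : n ≠ 0) (hc : Tendsto (fun k : ℕ => c k ^ ((1 : ℝ) / k)) atTop (nhds μ))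
    (h : ∀ k ≠ 0, a ^ k ≤ c (n * k)) : a ^ ((1 : ℝ) / n) ≤ μ := by
  refine ge_of_tendsto (hc.comp (tendsto_id.const_mul_atTop' (Nat.pos_of_ne_zero hn))) ?_
  filter_upwards [eventually_ne_atTop 0] with k hk
  calc a ^ ((1 : ℝ) / n) = (a ^ k) ^ ((1 : ℝ) / (n * k : ℕ)) := by
        rw [← Real.rpow_natCast, ← Real.rpow_mul ha]
        congr 1
        push_cast
        field_simp
    _ ≤ c (n * k) ^ ((1 : ℝ) / (n * k : ℕ)) :=
        Real.rpow_le_rpow (by positivity) (h k hk) (by positivity)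

/-- For every `n ≥ 1`, the taxi walk connective constant
`μ_taxi = lim_{n→∞} c_n^{1/n}` satisfies `μ_taxi ≥ b_n^{1/n}`. -/
theorem muTaxi_ge_bridge_root (μ : ℝ)
    (hμ : Filter.Tendsto (fun n : ℕ => (taxiCount n : ℝ) ^ ((1 : ℝ) / (n : ℝ)))
      Filter.atTop (nhds μ))
    (n : ℕ) (hn : 1 ≤ n) :
    (bridgeCount n : ℝ) ^ ((1 : ℝ) / (n : ℝ)) ≤ μ := by
  refine rpow_one_div_le_of_tendsto_of_pow_le (Nat.cast_nonneg _) (by omega) hμ fun k hk => ?_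
  exact_mod_cast (bridgeCount_pow_le n k).trans (bridgeCount_le_taxiCount (by positivity))
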